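/- For every nonnegative integer k, the Apéry number b_k := ∑_{j=0}^k C(k,j)^2 C(k+j,j) satisfies b_k ≡ 3^k (mod 5). -/

import Mathlib

/-!
By Lucas' theorem, for `r, s < p` the summand `C(n,k)² C(n+k,k)` at `n = pm + r`, `k = pi + s`
is congruent mod `p` to the product of the summands at `(m, i)` and at `(r, s)`; hence
`b_{pm+r} ≡ b_m b_r (mod p)`. The powers `3^n` satisfy the same rule mod `5` because `3^5 ≡ 3`,
and both sequences agree for `n < 5`, so they agree everywhere by induction on the base-`5` digits.
-/

open Finset

theorem Finset.sum_range_mul_eq_sum_sum {M : Type*} [AddCommMonoid M] (f : ℕ → M) (p n : ℕ) :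
    ∑ j ∈ range (p * n), f j = ∑ i ∈ range n, ∑ s ∈ range p, f (p * i + s) := by
  induction n with
  | zero => simp
  | succ n ih => rw [Nat.mul_succ, sum_range_add, ih, sum_range_succ]

namespace Apery

def HasLucasProperty {M : Type*} [Mul M] (p : ℕ) (f : ℕ → M) : Prop :=
  ∀ m r, r < p → f (p * m + r) = f m * f r

theorem HasLucasProperty.eq_of_forall_lt {M : Type*} [Mul M] {p : ℕ} {f g : ℕ → M} (hp : 1 < p)
    (hf : HasLucasProperty p f) (hg : HasLucasProperty p g) (h : ∀ r < p, f r = g r) (n : ℕ) :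
    f n = g n := by
  induction n using Nat.strong_induction_on with
  | _ n ih =>
    rcases lt_or_ge n p with hn | hn
    · exact h n hn
    · have hmod : n % p < p := Nat.mod_lt n (by omega)
      rw [← Nat.div_add_mod n p, hf _ _ hmod, hg _ _ hmod, h _ hmod,
        ih _ (Nat.div_lt_self (by omega) hp)]

theorem hasLucasProperty_pow {p : ℕ} [Fact p.Prime] (x : ZMod p) :
    HasLucasProperty p (x ^ ·) := fun m r _ => by
  show x ^ (p * m + r) = x ^ m * x ^ r
  rw [pow_add, pow_mul, ZMod.pow_card]

def aperyTerm (n k : ℕ) : ℕ := n.choose k ^ 2 * (n + k).choose k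

def aperyB (n : ℕ) : ℕ := ∑ k ∈ range (n + 1), aperyTerm n k

theorem aperyB_eq_sum_range {n N : ℕ} (h : n < N) : aperyB n = ∑ k ∈ range N, aperyTerm n k :=
  sum_subset (range_subset_range.2 h) fun k _ hk => by
    rw [mem_range, not_lt] at hk
    simp [aperyTerm, Nat.choose_eq_zero_of_lt hk]

section Lucas

variable {p : ℕ} [Fact p.Prime]

theorem cast_choose_eq_mul (n k : ℕ) :
    (n.choose k : ZMod p) = (n % p).choose (k % p) * (n / p).choose (k / p) := by
  exact_mod_cast (ZMod.natCast_eq_natCast_iff _ _ _).2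
    Choose.choose_modEq_choose_mod_mul_choose_div_nat

theorem cast_choose_mul_add_mul_add {m i r s : ℕ} (hr : r < p) (hs : s < p) :
    ((p * m + r).choose (p * i + s) : ZMod p) = r.choose s * m.choose i := by
  have hp : 0 < p := Fact.out (p := p.Prime) |>.pos
  rw [cast_choose_eq_mul, Nat.mul_add_mod, Nat.mul_add_mod, Nat.mod_eq_of_lt hr,
    Nat.mod_eq_of_lt hs, Nat.mul_add_div hp, Nat.mul_add_div hp, Nat.div_eq_of_lt hr,
    Nat.div_eq_of_lt hs, add_zero, add_zero]

theorem cast_choose_mul_add_add {n i r s : ℕ} (hr : r < p) (hs : s < p) :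
    ((p * n + (r + s)).choose (p * i + s) : ZMod p) = (r + s).choose s * n.choose i := by
  rcases lt_or_ge (r + s) p with hrs | hrs
  · exact cast_choose_mul_add_mul_add hrs hs
  · -- with a carry, the last base-`p` digit `t` of `r + s` is below `s`, so both sides vanish
    obtain ⟨t, ht⟩ : ∃ t, r + s = p + t := Nat.exists_eq_add_of_le hrs
    rw [ht]
    have hts : t < s := by omega
    have lhs := cast_choose_mul_add_mul_add (m := n + 1) (i := i) (by omega : t < p) hs
    have rhs := cast_choose_mul_add_mul_add (m := 1) (i := 0) (by omega : t < p) hs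
    simp only [Nat.choose_eq_zero_of_lt hts, Nat.cast_zero, zero_mul, mul_one, mul_zero,
      zero_add] at lhs rhs
    rw [← add_assoc, ← mul_add_one, lhs, rhs, zero_mul]

theorem cast_aperyTerm_mul_add_mul_add {m i r s : ℕ} (hr : r < p) (hs : s < p) :
    (aperyTerm (p * m + r) (p * i + s) : ZMod p) = aperyTerm m i * aperyTerm r s := by
  have hsum : p * m + r + (p * i + s) = p * (m + i) + (r + s) := by ring
  simp only [aperyTerm, Nat.cast_mul, Nat.cast_pow]
  rw [hsum, cast_choose_mul_add_mul_add hr hs, cast_choose_mul_add_add hr hs]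
  ring

theorem hasLucasProperty_aperyB : HasLucasProperty p (fun n => (aperyB n : ZMod p)) := by
  intro m r hr
  have hlt : p * m + r < p * (m + 1) := by rw [mul_add_one]; omega
  calc (aperyB (p * m + r) : ZMod p)
      = ∑ i ∈ range (m + 1), ∑ s ∈ range p, (aperyTerm (p * m + r) (p * i + s) : ZMod p) := by
        rw [aperyB_eq_sum_range hlt, Nat.cast_sum, sum_range_mul_eq_sum_sum]
    _ = ∑ i ∈ range (m + 1), ∑ s ∈ range p, (aperyTerm m i : ZMod p) * aperyTerm r s :=
        sum_congr rfl fun i _ => sum_congr rfl fun s hs =>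
          cast_aperyTerm_mul_add_mul_add hr (mem_range.1 hs)
    _ = aperyB m * aperyB r := by
        rw [aperyB, aperyB_eq_sum_range hr]
        push_cast
        rw [sum_mul_sum]

end Lucas

end Apery

theorem apery_b_mod_five (k : ℕ) :
    (∑ j ∈ Finset.range (k + 1), (k.choose j) ^ 2 * (k + j).choose j) ≡ 3 ^ k [MOD 5] := by
  have hsmall : ∀ r < 5, (Apery.aperyB r : ZMod 5) = 3 ^ r := by decide
  have : Fact (Nat.Prime 5) := ⟨Nat.prime_five⟩
  have h : (Apery.aperyB k : ZMod 5) = 3 ^ k :=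
    Apery.HasLucasProperty.eq_of_forall_lt (by norm_num) Apery.hasLucasProperty_aperyB
      (Apery.hasLucasProperty_pow 3) hsmall k
  rw [← ZMod.natCast_eq_natCast_iff]
  exact_mod_cast h
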